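/- arXiv:2309.11990 — 2 statements merged into one kernel-verified Lean document; each statement's English description precedes it below -/
import Mathlib

section
/- The closure of B₁ in the space H(A₁) equals the standard middle-thirds Cantor set C; this closure, with the subspace topology inherited from H(A₁), is homeomorphic to C with the Euclidean topology; and the set (closure of B₁ in H(A₁)) \ B₁, with the subspace topology inherited from H(A₁), is homeomorphic to the space of irrational numbers ℝ \ ℚ with its usual (Euclidean) topology. -/
/-!
Points outside `B₁` keep their Euclidean neighbourhoods in `H(A₁)`, while every `b ∈ B₁` is the
left endpoint of an interval of the ternary construction, so the Cantor set `C` has a gap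
immediately to the left of `b`. Hence the closure of `B₁` is its Euclidean closure `C`, and on
subsets of `C` the sets `[b, b + ε)` are already relatively open: `H(A₁)` induces the Euclidean
topology there. Both `C \ B₁` and the irrationals are then parametrised by the Baire space through
Lusin schemes. For `C \ B₁`, the children of a construction interval `[b, b + 3⁻ᴺ]` are the
intervals `[b + 2·3⁻ᴹ, b + 3·3⁻ᴹ]`, `M > N`, which exhaust it up to the point `b ∈ B₁`. For the
irrationals, an interval with rational endpoints is cut at rationals accumulating at both ends,
chosen so that the `n`-th rational is excluded at depth `n`.
-/

open Set TopologicalSpace Topology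

def hattori (A : Set ℝ) : TopologicalSpace ℝ :=
  TopologicalSpace.generateFrom
    ({s : Set ℝ | IsOpen s} ∪ {s : Set ℝ | ∃ x ∉ A, ∃ ε > 0, s = Set.Ico x (x + ε)})

def B1 : Set ℝ :=
  {x | ∃ n : ℕ, ∃ c : ℕ → ℝ, (∀ i, c i = 0 ∨ c i = 2) ∧
    x = ∑ i ∈ Finset.range n, c i / 3 ^ (i + 1)}

def A1 : Set ℝ := B1ᶜ

def cantorLeftEndpoints (n : ℕ) : Set ℝ :=
  {x | ∃ c : ℕ → ℝ, (∀ i, c i = 0 ∨ c i = 2) ∧ x = ∑ i ∈ Finset.range n, c i / 3 ^ (i + 1)}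

theorem B1_eq_iUnion_cantorLeftEndpoints : B1 = ⋃ n, cantorLeftEndpoints n := by
  ext x
  simp only [B1, cantorLeftEndpoints, mem_ofPred_eq, mem_iUnion]

theorem cantorLeftEndpoints_zero : cantorLeftEndpoints 0 = {0} := by
  ext x
  simp only [cantorLeftEndpoints, Finset.range_zero, Finset.sum_empty, mem_ofPred_eq,
    mem_singleton_iff]
  exact ⟨fun ⟨_, _, hx⟩ => hx, fun hx => ⟨fun _ => 0, fun _ => Or.inl rfl, hx⟩⟩

theorem sum_range_succ_div_three_pow (c : ℕ → ℝ) (n : ℕ) :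
    ∑ i ∈ Finset.range (n + 1), c i / 3 ^ (i + 1) =
      (c 0 + ∑ i ∈ Finset.range n, c (i + 1) / 3 ^ (i + 1)) / 3 := by
  rw [Finset.sum_range_succ', add_div, Finset.sum_div, add_comm]
  congr 1
  · norm_num
  · exact Finset.sum_congr rfl fun i _ => by rw [pow_succ, div_div]

theorem cantorLeftEndpoints_succ (n : ℕ) :
    cantorLeftEndpoints (n + 1) =
      (· / 3) '' cantorLeftEndpoints n ∪ (fun y => (2 + y) / 3) '' cantorLeftEndpoints n := by
  ext x
  constructor
  · rintro ⟨c, hc, rfl⟩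
    rw [sum_range_succ_div_three_pow]
    have hy : ∑ i ∈ Finset.range n, c (i + 1) / 3 ^ (i + 1) ∈ cantorLeftEndpoints n :=
      ⟨fun i => c (i + 1), fun i => hc (i + 1), rfl⟩
    rcases hc 0 with h | h <;> rw [h]
    · exact Or.inl ⟨_, hy, by simp⟩
    · exact Or.inr ⟨_, hy, rfl⟩
  · have key : ∀ d : ℝ, (d = 0 ∨ d = 2) → ∀ y ∈ cantorLeftEndpoints n,
        (d + y) / 3 ∈ cantorLeftEndpoints (n + 1) := by
      rintro d hd y ⟨c, hc, rfl⟩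
      refine ⟨fun i => if i = 0 then d else c (i - 1), fun i => ?_, ?_⟩
      · dsimp only
        split_ifs
        exacts [hd, hc _]
      · simp [sum_range_succ_div_three_pow]
    rintro (⟨y, hy, rfl⟩ | ⟨y, hy, rfl⟩)
    · simpa using key 0 (Or.inl rfl) y hy
    · exact key 2 (Or.inr rfl) y hy

theorem cantorLeftEndpoints_mono : Monotone cantorLeftEndpoints := by
  refine monotone_nat_of_le_succ fun n => ?_
  induction n with
  | zero =>
    rw [cantorLeftEndpoints_succ, cantorLeftEndpoints_zero]
    exact subset_union_of_subset_left (by simp) _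
  | succ n ih =>
    rw [cantorLeftEndpoints_succ (n + 1)]
    conv_lhs => rw [cantorLeftEndpoints_succ n]
    exact union_subset_union (image_mono ih) (image_mono ih)

theorem add_mem_cantorLeftEndpoints_succ {n : ℕ} {y : ℝ} (hy : y ∈ cantorLeftEndpoints n) :
    y + 2 * 3⁻¹ ^ (n + 1) ∈ cantorLeftEndpoints (n + 1) := by
  induction n generalizing y with
  | zero =>
    rw [cantorLeftEndpoints_zero] at hy
    rw [hy, cantorLeftEndpoints_succ, cantorLeftEndpoints_zero]
    exact Or.inr ⟨0, rfl, by norm_num⟩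
  | succ n ih =>
    rw [cantorLeftEndpoints_succ] at hy ⊢
    rcases hy with ⟨y, hy, rfl⟩ | ⟨y, hy, rfl⟩
    · exact Or.inl ⟨_, ih hy, by ring⟩
    · exact Or.inr ⟨_, ih hy, by ring⟩

theorem preCantorSet_eq_biUnion (n : ℕ) :
    preCantorSet n = ⋃ y ∈ cantorLeftEndpoints n, Icc y (y + 3⁻¹ ^ n) := by
  induction n with
  | zero => simp [cantorLeftEndpoints_zero]
  | succ n ih =>
    ext x
    simp only [preCantorSet_succ, cantorLeftEndpoints_succ, ih, mem_union, mem_image,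
      mem_iUnion, mem_Icc, exists_prop, pow_succ]
    constructor
    · rintro (⟨w, ⟨y, hy, hw⟩, rfl⟩ | ⟨w, ⟨y, hy, hw⟩, rfl⟩)
      · exact ⟨y / 3, Or.inl ⟨y, hy, rfl⟩, by constructor <;> linarith [hw.1, hw.2]⟩
      · exact ⟨(2 + y) / 3, Or.inr ⟨y, hy, rfl⟩, by constructor <;> linarith [hw.1, hw.2]⟩
    · rintro ⟨_, ⟨y, hy, rfl⟩ | ⟨y, hy, rfl⟩, hx⟩
      · exact Or.inl ⟨3 * x, ⟨y, hy, by constructor <;> linarith [hx.1, hx.2]⟩, by ring⟩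
      · exact Or.inr ⟨3 * x - 2, ⟨y, hy, by constructor <;> linarith [hx.1, hx.2]⟩, by ring⟩

theorem Icc_subset_preCantorSet {n : ℕ} {y : ℝ} (hy : y ∈ cantorLeftEndpoints n) :
    Icc y (y + 3⁻¹ ^ n) ⊆ preCantorSet n := by
  rw [preCantorSet_eq_biUnion]
  exact subset_biUnion_of_mem (u := fun y => Icc y (y + 3⁻¹ ^ n)) hy

theorem cantorLeftEndpoints_subset_cantorSet (n : ℕ) : cantorLeftEndpoints n ⊆ cantorSet :=
  fun y hy => mem_iInter.2 fun m =>
    preCantorSet_antitone (le_max_right n m) <|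
      Icc_subset_preCantorSet (cantorLeftEndpoints_mono (le_max_left n m) hy)
        ⟨le_rfl, by simp⟩

theorem B1_subset_cantorSet : B1 ⊆ cantorSet := by
  rw [B1_eq_iUnion_cantorLeftEndpoints]
  exact iUnion_subset cantorLeftEndpoints_subset_cantorSet

theorem nonneg_and_add_pow_le_one_of_mem_cantorLeftEndpoints {n : ℕ} {y : ℝ}
    (hy : y ∈ cantorLeftEndpoints n) : 0 ≤ y ∧ y + 3⁻¹ ^ n ≤ 1 := by
  have hIcc := (Icc_subset_preCantorSet hy).trans preCantorSet_subset_unitInterval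
  have ht : 0 ≤ (3⁻¹ : ℝ) ^ n := by positivity
  exact ⟨(hIcc ⟨le_rfl, by linarith⟩).1, (hIcc ⟨by linarith, le_rfl⟩).2⟩

theorem two_mul_le_abs_sub_of_mem_cantorLeftEndpoints {n : ℕ} {y y' : ℝ}
    (hy : y ∈ cantorLeftEndpoints n) (hy' : y' ∈ cantorLeftEndpoints n) (hne : y ≠ y') :
    2 * 3⁻¹ ^ n ≤ |y - y'| := by
  induction n generalizing y y' with
  | zero =>
    rw [cantorLeftEndpoints_zero] at hy hy'
    exact absurd (hy.trans hy'.symm) hne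
  | succ n ih =>
    rw [cantorLeftEndpoints_succ] at hy hy'
    have hb := fun {z} (hz : z ∈ cantorLeftEndpoints n) =>
      nonneg_and_add_pow_le_one_of_mem_cantorLeftEndpoints hz
    have ht : 0 ≤ (3⁻¹ : ℝ) ^ n := by positivity
    rw [pow_succ]
    rcases hy with ⟨z, hz, rfl⟩ | ⟨z, hz, rfl⟩ <;>
      rcases hy' with ⟨z', hz', rfl⟩ | ⟨z', hz', rfl⟩
    · have := ih hz hz' fun h => hne (by rw [h])
      rw [← sub_div, abs_div, abs_of_pos (by norm_num : (0 : ℝ) < 3)]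
      linarith
    · rw [abs_of_neg (by linarith [hb hz, hb hz'])]
      linarith [hb hz, hb hz']
    · rw [abs_of_pos (by linarith [hb hz, hb hz'])]
      linarith [hb hz, hb hz']
    · have := ih hz hz' fun h => hne (by rw [h])
      rw [div_sub_div_same, add_sub_add_left_eq_sub, abs_div,
        abs_of_pos (by norm_num : (0 : ℝ) < 3)]
      linarith

theorem preCantorSet_inter_Ioo_subset {n : ℕ} {y : ℝ} (hy : y ∈ cantorLeftEndpoints n) :
    preCantorSet n ∩ Ioo (y - 3⁻¹ ^ n) (y + 2 * 3⁻¹ ^ n) ⊆ Icc y (y + 3⁻¹ ^ n) := by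
  rintro z ⟨hz, hzl, hzr⟩
  rw [preCantorSet_eq_biUnion, mem_iUnion₂] at hz
  obtain ⟨y', hy', hz'⟩ := hz
  obtain rfl | hne := eq_or_ne y y'
  · exact hz'
  have hsep := two_mul_le_abs_sub_of_mem_cantorLeftEndpoints hy hy' hne
  rcases le_or_gt 0 (y - y') with h | h
  · rw [abs_of_nonneg h] at hsep; linarith [hz'.2]
  · rw [abs_of_neg h] at hsep; linarith [hz'.1]

theorem disjoint_Ioo_cantorSet {n : ℕ} {y : ℝ} (hy : y ∈ cantorLeftEndpoints n) :
    Disjoint (Ioo (y - 3⁻¹ ^ n) y) cantorSet := by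
  refine Set.disjoint_left.2 fun z hz hzC => ?_
  have ht : 0 < (3⁻¹ : ℝ) ^ n := by positivity
  have := preCantorSet_inter_Ioo_subset hy
    ⟨mem_iInter.1 hzC n, hz.1, by linarith [hz.2]⟩
  linarith [this.1, hz.2]

theorem closure_B1 : closure B1 = cantorSet := by
  refine (closure_minimal B1_subset_cantorSet isClosed_cantorSet).antisymm fun x hx => ?_
  refine Metric.mem_closure_iff.2 fun ε hε => ?_
  obtain ⟨n, hn⟩ := exists_pow_lt_of_lt_one hε (by norm_num : (3⁻¹ : ℝ) < 1)
  have hxn := mem_iInter.1 hx n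
  rw [preCantorSet_eq_biUnion, mem_iUnion₂] at hxn
  obtain ⟨y, hy, hxy⟩ := hxn
  refine ⟨y, B1_eq_iUnion_cantorLeftEndpoints ▸ mem_iUnion.2 ⟨n, hy⟩, ?_⟩
  rw [Real.dist_eq, abs_of_nonneg (by linarith [hxy.1])]
  linarith [hxy.2]

theorem hattori_le (A : Set ℝ) : hattori A ≤ (inferInstance : TopologicalSpace ℝ) := by
  conv_rhs => rw [← generateFrom_setOfPred_isOpen (inferInstance : TopologicalSpace ℝ)]
  exact generateFrom_anti subset_union_left

theorem nhds_hattori_of_mem {A : Set ℝ} {x : ℝ} (hx : x ∈ A) :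
    @nhds ℝ (hattori A) x = 𝓝 x := by
  refine (nhds_mono (hattori_le A)).antisymm ?_
  rw [hattori, nhds_generateFrom]
  refine le_iInf₂ fun s ⟨hxs, hs⟩ => Filter.le_principal_iff.2 ?_
  rcases hs with hs | ⟨y, hy, ε, -, rfl⟩
  · exact (show IsOpen s from hs).mem_nhds hxs
  · have hyx : y < x := hxs.1.lt_of_ne (ne_of_mem_of_not_mem hx hy).symm
    exact Ico_mem_nhds hyx hxs.2

theorem closure_hattori_eq_closure {A s : Set ℝ} (h : closure s \ s ⊆ A) :
    closure[hattori A] s = closure s := by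
  refine (@closure_minimal ℝ (hattori A) _ _ subset_closure
    (isClosed_closure.mono (hattori_le A))).antisymm fun x hx => ?_
  by_cases hxs : x ∈ s
  · exact @subset_closure ℝ (hattori A) s x hxs
  · rw [@mem_closure_iff_nhds ℝ (hattori A), nhds_hattori_of_mem (h ⟨hx, hxs⟩)]
    exact mem_closure_iff_nhds.1 hx

theorem induced_hattori_eq {A S : Set ℝ} (h : ∀ y ∉ A, ∃ δ > 0, Disjoint (Ioo (y - δ) y) S) :
    induced ((↑) : S → ℝ) (hattori A) = instTopologicalSpaceSubtype := by
  refine (induced_mono (hattori_le A)).antisymm ?_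
  rw [hattori, induced_generateFrom_eq]
  refine le_generateFrom ?_
  rintro _ ⟨s, hs | ⟨y, hy, ε, -, rfl⟩, rfl⟩
  · exact (show IsOpen s from hs).preimage continuous_subtype_val
  · obtain ⟨δ, hδ, hgap⟩ := h y hy
    have : ((↑) : S → ℝ) ⁻¹' Ico y (y + ε) = (↑) ⁻¹' Ioo (y - δ) (y + ε) := by
      ext z
      simp only [mem_preimage, mem_Ico, mem_Ioo]
      refine ⟨fun hz => ⟨by linarith [hz.1], hz.2⟩, fun hz => ⟨?_, hz.2⟩⟩
      by_contra! hzy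
      exact Set.disjoint_left.1 hgap ⟨hz.1, hzy⟩ z.2
    rw [this]
    exact isOpen_Ioo.preimage continuous_subtype_val

theorem closure_hattori_A1_B1 : closure[hattori A1] B1 = cantorSet := by
  rw [closure_hattori_eq_closure (A := A1) fun x hx => hx.2, closure_B1]

theorem induced_hattori_A1_eq {S : Set ℝ} (hS : S ⊆ cantorSet) :
    induced ((↑) : S → ℝ) (hattori A1) = instTopologicalSpaceSubtype := by
  refine induced_hattori_eq fun y hy => ?_
  rw [A1, notMem_compl_iff, B1_eq_iUnion_cantorLeftEndpoints, mem_iUnion] at hy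
  obtain ⟨n, hn⟩ := hy
  exact ⟨3⁻¹ ^ n, by positivity, (disjoint_Ioo_cantorSet hn).mono_right hS⟩

namespace CantorScheme

open PiNat Function

variable {α β : Type*} {A : List β → Set α}

theorem eq_of_length_eq_of_not_disjoint (hanti : CantorScheme.Antitone A)
    (hdisj : CantorScheme.Disjoint A) :
    ∀ {l₁ l₂ : List β}, l₁.length = l₂.length → ¬Disjoint (A l₁) (A l₂) → l₁ = l₂
  | [], [], _, _ => rfl
  | a :: l₁, b :: l₂, hlen, hint => by
    obtain rfl : l₁ = l₂ := eq_of_length_eq_of_not_disjoint hanti hdisj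
      (by simpa using hlen) fun h => hint (h.mono (hanti _ _) (hanti _ _))
    by_contra hab
    exact hint (hdisj l₁ fun h => hab (h ▸ rfl))

theorem exists_forall_mem_res {y : α} (hroot : y ∈ A [])
    (hcover : ∀ l, y ∈ A l → ∃ a, y ∈ A (a :: l)) : ∃ x : ℕ → β, ∀ n, y ∈ A (res x n) := by
  have : Nonempty β := ⟨(hcover [] hroot).choose⟩
  choose! g hg using hcover
  let L : ℕ → List β := fun n => Nat.rec [] (fun _ l => g l :: l) n
  have hL : ∀ n, y ∈ A (L n) := fun n => Nat.rec hroot (fun _ ih => hg _ ih) n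
  have hres : ∀ n, res (fun n => g (L n)) n = L n := fun n => by
    induction n with
    | zero => rfl
    | succ n ih => rw [res_succ, ih]
  exact ⟨fun n => g (L n), fun n => hres n ▸ hL n⟩

theorem eq_of_forall_mem_res [MetricSpace α] (hdiam : VanishingDiam A) {x : ℕ → β} {y z : α}
    (hy : ∀ n, y ∈ A (res x n)) (hz : ∀ n, z ∈ A (res x n)) : y = z :=
  eq_of_forall_dist_le fun ε hε =>
    let ⟨n, hn⟩ := hdiam.dist_lt ε hε x
    (hn y (hy n) z (hz n)).le

theorem nonempty_homeomorph_of_cover [MetricSpace α] [CompleteSpace α] [TopologicalSpace β]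
    [DiscreteTopology β] {T : Set α} (hanti : ClosureAntitone A)
    (hdisj : CantorScheme.Disjoint A) (hdiam : VanishingDiam A) (hne : ∀ l, (A l).Nonempty)
    (hroot : T ⊆ A []) (hcover : ∀ l, ∀ y ∈ T, y ∈ A l → ∃ a, y ∈ A (a :: l))
    (hbranch : ∀ (x : ℕ → β) (y : α), (∀ n, y ∈ A (res x n)) → y ∈ T)
    (hopen : ∀ l, IsOpen (((↑) : T → α) ⁻¹' A l)) : Nonempty ((ℕ → β) ≃ₜ T) := by
  have htotal := hanti.map_of_vanishingDiam hdiam hne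
  let f : (ℕ → β) → α := fun x => (inducedMap A).2 ⟨x, htotal ▸ mem_univ x⟩
  have hf : ∀ x n, f x ∈ A (res x n) := fun x => map_mem _
  let F : (ℕ → β) → T := fun x => ⟨f x, hbranch x _ (hf x)⟩
  have hF_inj : Injective F := fun x y h =>
    congrArg Subtype.val (hdisj.map_injective (congrArg Subtype.val h : f x = f y))
  have hF_surj : Surjective F := by
    rintro ⟨y, hy⟩
    obtain ⟨x, hx⟩ := exists_forall_mem_res (hroot hy) fun l => hcover l y hy
    exact ⟨x, Subtype.ext (eq_of_forall_mem_res hdiam (hf x) hx)⟩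
  have hF_cont : Continuous F :=
    (hdiam.map_continuous.comp (continuous_id.subtype_mk _)).subtype_mk _
  have hF_image : ∀ x n, F '' cylinder x n = (↑) ⁻¹' A (res x n) := by
    intro x n
    ext y
    rw [cylinder_eq_res]
    constructor
    · rintro ⟨w, hw, rfl⟩
      exact (hw : res w n = res x n) ▸ hf w n
    · intro hy
      obtain ⟨w, rfl⟩ := hF_surj y
      refine ⟨w, eq_of_length_eq_of_not_disjoint hanti.antitone hdisj
        (by rw [res_length, res_length]) (Set.not_disjoint_iff.2 ⟨f w, hf w n, hy⟩), rfl⟩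
  have hF_open : IsOpenMap F := (isTopologicalBasis_cylinders _).isOpenMap_iff.2 <| by
    rintro _ ⟨x, n, rfl⟩
    exact hF_image x n ▸ hopen _
  exact ⟨(Equiv.ofBijective F ⟨hF_inj, hF_surj⟩).toHomeomorphOfContinuousOpen hF_cont hF_open⟩

theorem vanishingDiam_of_ediam_cons_le [PseudoMetricSpace α] {c : ℕ → ℝ}
    (hc : Filter.Tendsto c Filter.atTop (𝓝 0))
    (h : ∀ a l, Metric.ediam (A (a :: l)) ≤ ENNReal.ofReal (c l.length)) :
    VanishingDiam A := by
  intro x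
  rw [← Filter.tendsto_add_atTop_iff_nat 1]
  have hc' : Filter.Tendsto (fun n => ENNReal.ofReal (c n)) Filter.atTop (𝓝 0) := by
    simpa using ENNReal.tendsto_ofReal hc
  refine tendsto_of_tendsto_of_tendsto_of_le_of_le tendsto_const_nhds hc' (fun _ => zero_le)
    fun n => ?_
  simpa [res_succ, res_length] using h (x n) (res x n)

end CantorScheme

theorem StrictMono.exists_mem_Ioo_add_one {α : Type*} [LinearOrder α] {t : ℤ → α}
    (ht : StrictMono t) {x : α} (hlo : ∃ j, t j < x) (hhi : ∃ j, x < t j) (hx : x ∉ range t) :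
    ∃ j, x ∈ Ioo (t j) (t (j + 1)) := by
  obtain ⟨k, hk⟩ := hhi
  obtain ⟨j, hj, hmax⟩ := Int.exists_greatest_of_bdd
    ⟨k, fun i hi => (ht.lt_iff_lt.1 (hi.trans hk)).le⟩ hlo
  refine ⟨j, hj, lt_of_not_ge fun h => ?_⟩
  have := hmax (j + 1) (h.lt_of_ne fun h' => hx ⟨_, h'⟩)
  omega

theorem StrictMono.notMem_Ioo_add_one {α : Type*} [LinearOrder α] {t : ℤ → α}
    (ht : StrictMono t) (i j : ℤ) : t i ∉ Ioo (t j) (t (j + 1)) := fun ⟨h₁, h₂⟩ => by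
  have := ht.lt_iff_lt.1 h₁
  have := ht.lt_iff_lt.1 h₂
  omega

theorem exists_div_two_pow_lt (c : ℝ) {ε : ℝ} (hε : 0 < ε) : ∃ k : ℕ, c / 2 ^ k < ε := by
  obtain ⟨k, hk⟩ := pow_unbounded_of_one_lt (c / ε) one_lt_two
  exact ⟨k, (div_lt_iff₀ (by positivity)).2 (by rwa [div_lt_iff₀ hε, mul_comm] at hk)⟩

def ladderCenter (p q r : ℚ) : ℚ := if r ∈ Ioo p q then r else (p + q) / 2

def ladder (p q r : ℚ) : ℤ → ℚ
  | (k : ℕ) => q - (q - ladderCenter p q r) / 2 ^ k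
  | .negSucc k => p + (ladderCenter p q r - p) / 2 ^ (k + 1)

section Ladder

variable {p q : ℚ} (r : ℚ)

theorem ladderCenter_mem_Ioo (h : p < q) : ladderCenter p q r ∈ Ioo p q := by
  unfold ladderCenter
  split_ifs with hr
  · exact hr
  · constructor <;> linarith

theorem ladder_zero {r : ℚ} (hr : r ∈ Ioo p q) : ladder p q r 0 = r := by
  simp [ladder, ladderCenter, hr]

theorem ladder_strictMono (h : p < q) : StrictMono (ladder p q r) := by
  obtain ⟨hpm, hmq⟩ := ladderCenter_mem_Ioo r h
  set m := ladderCenter p q r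
  refine strictMono_int_of_lt_succ fun j => ?_
  rcases j with k | _ | k
  · change q - (q - m) / 2 ^ k < q - (q - m) / 2 ^ (k + 1)
    have : 0 < q - m := by linarith
    gcongr
    exacts [one_lt_two, by omega]
  · change p + (m - p) / 2 ^ 1 < q - (q - m) / 2 ^ 0
    linarith
  · change p + (m - p) / 2 ^ (k + 2) < p + (m - p) / 2 ^ (k + 1)
    have : 0 < m - p := by linarith
    gcongr
    exacts [one_lt_two, by omega]

theorem ladder_mem_Ioo (h : p < q) (j : ℤ) : ladder p q r j ∈ Ioo p q := by
  obtain ⟨hpm, hmq⟩ := ladderCenter_mem_Ioo r h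
  set m := ladderCenter p q r
  rcases j with k | k
  · change p < q - (q - m) / 2 ^ k ∧ q - (q - m) / 2 ^ k < q
    have : (q - m) / 2 ^ k ≤ q - m := div_le_self (by linarith) (one_le_pow₀ one_le_two)
    have : 0 < (q - m) / 2 ^ k := div_pos (by linarith) (by positivity)
    constructor <;> linarith
  · change p < p + (m - p) / 2 ^ (k + 1) ∧ p + (m - p) / 2 ^ (k + 1) < q
    have : (m - p) / 2 ^ (k + 1) ≤ m - p := div_le_self (by linarith) (one_le_pow₀ one_le_two)
    have : 0 < (m - p) / 2 ^ (k + 1) := div_pos (by linarith) (by positivity)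
    constructor <;> linarith

theorem ladder_add_one_sub_le (h : p < q) (j : ℤ) :
    ladder p q r (j + 1) - ladder p q r j ≤ (q - p) / 2 := by
  obtain ⟨hpm, hmq⟩ := ladderCenter_mem_Ioo r h
  set m := ladderCenter p q r
  rcases j with k | _ | k
  · change q - (q - m) / 2 ^ (k + 1) - (q - (q - m) / 2 ^ k) ≤ (q - p) / 2
    have : (q - m) / 2 ^ k ≤ q - m := div_le_self (by linarith) (one_le_pow₀ one_le_two)
    rw [pow_succ, ← div_div]
    linarith
  · change q - (q - m) / 2 ^ 0 - (p + (m - p) / 2 ^ 1) ≤ (q - p) / 2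
    linarith
  · change p + (m - p) / 2 ^ (k + 1) - (p + (m - p) / 2 ^ (k + 2)) ≤ (q - p) / 2
    have : (m - p) / 2 ^ (k + 1) ≤ m - p := div_le_self (by linarith) (one_le_pow₀ one_le_two)
    rw [pow_succ _ (k + 1), ← div_div]
    linarith

theorem exists_ladder_lt {x : ℝ} (hx : (p : ℝ) < x) :
    ∃ j, (ladder p q r j : ℝ) < x := by
  obtain ⟨k, hk⟩ := exists_div_two_pow_lt ((ladderCenter p q r - p : ℚ) / 2) (sub_pos.2 hx)
  refine ⟨.negSucc k, ?_⟩
  change ((p + (ladderCenter p q r - p) / 2 ^ (k + 1) : ℚ) : ℝ) < x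
  push_cast at hk ⊢
  rw [pow_succ, mul_comm, ← div_div]
  linarith

theorem exists_lt_ladder {x : ℝ} (hx : x < q) : ∃ j, x < (ladder p q r j : ℝ) := by
  obtain ⟨k, hk⟩ := exists_div_two_pow_lt (q - ladderCenter p q r : ℚ) (sub_pos.2 hx)
  refine ⟨k, ?_⟩
  change x < ((q - (q - ladderCenter p q r) / 2 ^ k : ℚ) : ℝ)
  push_cast at hk ⊢
  linarith

theorem notMem_Ioo_ladder (h : p < q) (j : ℤ) :
    r ∉ Ioo (ladder p q r j) (ladder p q r (j + 1)) := by
  by_cases hr : r ∈ Ioo p q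
  · simpa only [ladder_zero hr] using (ladder_strictMono r h).notMem_Ioo_add_one 0 j
  · exact fun hj =>
      hr ⟨(ladder_mem_Ioo r h j).1.trans hj.1, hj.2.trans (ladder_mem_Ioo r h _).2⟩

end Ladder

/-- The rational with code `l.length` is a cut point of the node `l` or lies outside it, so no
branch of the scheme passes through a rational. -/
def irrationalCuts : List ℤ → ℤ → ℚ
  | [] => fun j => Denumerable.ofNat ℚ 0 + j
  | a :: l => ladder (irrationalCuts l a) (irrationalCuts l (a + 1))
      (Denumerable.ofNat ℚ (l.length + 1))

def irrationalScheme : List ℤ → Set ℝ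
  | [] => univ
  | a :: l => Ioo (irrationalCuts l a : ℝ) (irrationalCuts l (a + 1))

theorem irrationalCuts_strictMono : ∀ l, StrictMono (irrationalCuts l)
  | [] => fun i j h => by simpa [irrationalCuts] using h
  | a :: l => ladder_strictMono _ (irrationalCuts_strictMono l (lt_add_one a))

theorem irrationalCuts_cast_strictMono (l : List ℤ) :
    StrictMono fun j => (irrationalCuts l j : ℝ) :=
  Rat.cast_strictMono.comp (irrationalCuts_strictMono l)

theorem irrationalCuts_add_one_sub_le :
    ∀ (l : List ℤ) (j : ℤ), irrationalCuts l (j + 1) - irrationalCuts l j ≤ 2⁻¹ ^ l.length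
  | [], j => by simp [irrationalCuts]
  | a :: l, j => by
    have := irrationalCuts_add_one_sub_le l a
    have := ladder_add_one_sub_le (Denumerable.ofNat ℚ (l.length + 1))
      (irrationalCuts_strictMono l (lt_add_one a)) j
    rw [List.length_cons, pow_succ]
    exact this.trans (by linarith)

theorem exists_mem_irrationalScheme_cons {l : List ℤ} {x : ℝ} (hx : x ∈ irrationalScheme l)
    (hirr : Irrational x) : ∃ a, x ∈ irrationalScheme (a :: l) := by
  obtain ⟨hlo, hhi⟩ : (∃ j, (irrationalCuts l j : ℝ) < x) ∧ ∃ j, x < irrationalCuts l j := by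
    cases l with
    | nil =>
      obtain ⟨j, hj⟩ := exists_int_lt (x - Denumerable.ofNat ℚ 0)
      obtain ⟨k, hk⟩ := exists_int_gt (x - Denumerable.ofNat ℚ 0)
      refine ⟨⟨j, ?_⟩, ⟨k, ?_⟩⟩ <;>
        simp only [irrationalCuts, Rat.cast_add, Rat.cast_intCast] <;> linarith
    | cons a l => exact ⟨exists_ladder_lt _ hx.1, exists_lt_ladder _ hx.2⟩
  exact (irrationalCuts_cast_strictMono l).exists_mem_Ioo_add_one hlo hhi
    fun ⟨j, hj⟩ => hirr.ne_rat _ hj.symm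

theorem ratCast_notMem_irrationalScheme (a : ℤ) (l : List ℤ) :
    (Denumerable.ofNat ℚ l.length : ℝ) ∉ irrationalScheme (a :: l) := by
  rw [irrationalScheme, mem_Ioo, Rat.cast_lt, Rat.cast_lt, ← mem_Ioo]
  cases l with
  | nil =>
    have h0 : Denumerable.ofNat ℚ 0 = irrationalCuts [] 0 := by simp [irrationalCuts]
    rw [List.length_nil, h0]
    exact (irrationalCuts_strictMono []).notMem_Ioo_add_one 0 a
  | cons b l => exact notMem_Ioo_ladder _ (irrationalCuts_strictMono l (lt_add_one b)) a

theorem irrationalScheme_closureAntitone : CantorScheme.ClosureAntitone irrationalScheme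
  | [], _ => subset_univ _
  | b :: l, a => by
    have hpq := irrationalCuts_strictMono l (lt_add_one b)
    have hmem := ladder_mem_Ioo (Denumerable.ofNat ℚ (l.length + 1)) hpq
    refine (closure_minimal Ioo_subset_Icc_self isClosed_Icc).trans (Icc_subset_Ioo ?_ ?_)
    · exact_mod_cast (hmem a).1
    · exact_mod_cast (hmem (a + 1)).2

theorem irrationalScheme_disjoint : CantorScheme.Disjoint irrationalScheme := fun l _ _ hab =>
  (irrationalCuts_cast_strictMono l).monotone.pairwise_disjoint_on_Ioo_succ hab

theorem irrationalScheme_vanishingDiam : CantorScheme.VanishingDiam irrationalScheme :=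
  CantorScheme.vanishingDiam_of_ediam_cons_le
    (tendsto_pow_atTop_nhds_zero_of_lt_one (r := (2⁻¹ : ℝ)) (by norm_num) (by norm_num))
    fun a l => by
      rw [irrationalScheme, Real.ediam_Ioo]
      refine ENNReal.ofReal_le_ofReal ?_
      simpa using (Rat.cast_le (K := ℝ)).2 (irrationalCuts_add_one_sub_le l a)

theorem irrationalScheme_nonempty : ∀ l, (irrationalScheme l).Nonempty
  | [] => univ_nonempty
  | a :: l => nonempty_Ioo.2 (irrationalCuts_cast_strictMono l (lt_add_one a))

theorem nonempty_homeomorph_irrational : Nonempty ((ℕ → ℤ) ≃ₜ {x : ℝ | Irrational x}) := by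
  refine CantorScheme.nonempty_homeomorph_of_cover irrationalScheme_closureAntitone
    irrationalScheme_disjoint irrationalScheme_vanishingDiam irrationalScheme_nonempty
    (subset_univ _) (fun l x hx hxl => exists_mem_irrationalScheme_cons hxl hx) ?_ ?_
  · rintro x y hy ⟨r, rfl⟩
    obtain ⟨n, rfl⟩ : ∃ n, Denumerable.ofNat ℚ n = r := ⟨_, Denumerable.ofNat_encode r⟩
    have := hy (n + 1)
    rw [PiNat.res_succ] at this
    refine ratCast_notMem_irrationalScheme (x n) (PiNat.res x n) ?_
    rwa [PiNat.res_length]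
  · intro l
    cases l with
    | nil => simp [irrationalScheme]
    | cons a l => exact isOpen_Ioo.preimage continuous_subtype_val

def cantorDepth : List ℕ → ℕ
  | [] => 0
  | a :: l => cantorDepth l + a + 1

/-- The child `a` of a node is reached from it by `a` steps to the left followed by one step to
the right in the ternary construction. -/
noncomputable def cantorCorner : List ℕ → ℝ
  | [] => 0
  | a :: l => cantorCorner l + 2 * 3⁻¹ ^ cantorDepth (a :: l)

def cantorDiffScheme (l : List ℕ) : Set ℝ :=
  Icc (cantorCorner l) (cantorCorner l + 3⁻¹ ^ cantorDepth l)

theorem cantorCorner_mem : ∀ l, cantorCorner l ∈ cantorLeftEndpoints (cantorDepth l)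
  | [] => by simp [cantorCorner, cantorDepth, cantorLeftEndpoints_zero]
  | a :: l => add_mem_cantorLeftEndpoints_succ <|
      cantorLeftEndpoints_mono (Nat.le_add_right _ a) (cantorCorner_mem l)

theorem length_le_cantorDepth : ∀ l : List ℕ, l.length ≤ cantorDepth l
  | [] => le_rfl
  | a :: l => by
    have := length_le_cantorDepth l
    simp only [List.length_cons, cantorDepth]
    omega

theorem cantorDiffScheme_cons (a : ℕ) (l : List ℕ) :
    cantorDiffScheme (a :: l) = Icc (cantorCorner l + 2 * 3⁻¹ ^ (cantorDepth l + a + 1))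
      (cantorCorner l + 3 * 3⁻¹ ^ (cantorDepth l + a + 1)) := by
  simp only [cantorDiffScheme, cantorCorner, cantorDepth]
  ring_nf

theorem cantorDiffScheme_subset_preCantorSet (l : List ℕ) (n : ℕ) (hn : n ≤ l.length) :
    cantorDiffScheme l ⊆ preCantorSet n :=
  (Icc_subset_preCantorSet (cantorCorner_mem l)).trans
    (preCantorSet_antitone (hn.trans (length_le_cantorDepth l)))

theorem three_mul_pow_cantorDepth_cons_le (a : ℕ) (l : List ℕ) :
    3 * (3⁻¹ : ℝ) ^ (cantorDepth l + a + 1) ≤ 3⁻¹ ^ (cantorDepth l + a) := by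
  rw [pow_succ]
  linarith

theorem cantorDiffScheme_antitone : CantorScheme.Antitone cantorDiffScheme := fun l a => by
  rw [cantorDiffScheme_cons, cantorDiffScheme]
  have := three_mul_pow_cantorDepth_cons_le a l
  have := pow_le_pow_of_le_one (by norm_num) (by norm_num : (3⁻¹ : ℝ) ≤ 1)
    (Nat.le_add_right (cantorDepth l) a)
  have := pow_pos (by norm_num : (0 : ℝ) < 3⁻¹) (cantorDepth l + a + 1)
  exact Icc_subset_Icc (by linarith) (by linarith)

theorem cantorDiffScheme_disjoint : CantorScheme.Disjoint cantorDiffScheme := by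
  suffices h : ∀ l a b, a < b →
      Disjoint (cantorDiffScheme (a :: l)) (cantorDiffScheme (b :: l)) from
    fun l a b hab => hab.lt_or_gt.elim (h l a b) fun hba => (h l b a hba).symm
  intro l a b hab
  rw [cantorDiffScheme_cons, cantorDiffScheme_cons, Set.disjoint_left]
  rintro z ⟨hza, -⟩ ⟨-, hzb⟩
  have := three_mul_pow_cantorDepth_cons_le b l
  have := pow_le_pow_of_le_one (by norm_num) (by norm_num : (3⁻¹ : ℝ) ≤ 1)
    (by omega : cantorDepth l + a + 1 ≤ cantorDepth l + b)
  have := pow_pos (by norm_num : (0 : ℝ) < 3⁻¹) (cantorDepth l + a + 1)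
  linarith

theorem cantorDiffScheme_vanishingDiam : CantorScheme.VanishingDiam cantorDiffScheme :=
  CantorScheme.vanishingDiam_of_ediam_cons_le
    (tendsto_pow_atTop_nhds_zero_of_lt_one (r := (3⁻¹ : ℝ)) (by norm_num) (by norm_num))
    fun a l => by
      rw [cantorDiffScheme, Real.ediam_Icc, add_sub_cancel_left]
      exact ENNReal.ofReal_le_ofReal <| pow_le_pow_of_le_one (by norm_num) (by norm_num) <|
        (Nat.le_succ _).trans (length_le_cantorDepth (a :: l))

theorem cantorDiffScheme_nonempty (l : List ℕ) : (cantorDiffScheme l).Nonempty :=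
  nonempty_Icc.2 (le_add_of_nonneg_right (by positivity))

theorem exists_mem_cantorDiffScheme_cons {l : List ℕ} {y : ℝ} (hy : y ∈ cantorDiffScheme l)
    (hyT : y ∈ cantorSet \ B1) : ∃ a, y ∈ cantorDiffScheme (a :: l) := by
  set b := cantorCorner l
  set D := cantorDepth l
  have hb : b ∈ cantorLeftEndpoints D := cantorCorner_mem l
  have hbB : b ∈ B1 := B1_eq_iUnion_cantorLeftEndpoints ▸ mem_iUnion.2 ⟨D, hb⟩
  have hd : 0 < y - b := sub_pos.2 (hy.1.lt_of_ne fun h => hyT.2 (h ▸ hbB))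
  have ht : (0 : ℝ) < 3⁻¹ ^ D := by positivity
  obtain ⟨k, hk₁, hk₂⟩ := exists_nat_pow_near_of_lt_one (div_pos hd ht)
    ((div_le_one ht).2 (by linarith [hy.2])) (by norm_num) (by norm_num : (3⁻¹ : ℝ) < 1)
  rw [lt_div_iff₀ ht] at hk₁
  rw [div_le_iff₀ ht] at hk₂
  have hs₁ : (3⁻¹ : ℝ) ^ (D + k + 1) = 3⁻¹ ^ (k + 1) * 3⁻¹ ^ D := by ring
  have hs₃ : (3⁻¹ : ℝ) ^ k * 3⁻¹ ^ D = 3 * 3⁻¹ ^ (D + k + 1) := by ring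
  have hc := add_mem_cantorLeftEndpoints_succ
    (cantorLeftEndpoints_mono (Nat.le_add_right D k) hb)
  have := preCantorSet_inter_Ioo_subset hc
    ⟨mem_iInter.1 hyT.1 _, by linarith, by linarith⟩
  exact ⟨k, by rw [cantorDiffScheme_cons]; constructor <;> linarith [this.1, this.2]⟩

theorem cantorCorner_lt_of_mem_cantorDiffScheme_cons {a : ℕ} {l : List ℕ} {y : ℝ}
    (hy : y ∈ cantorDiffScheme (a :: l)) : cantorCorner l < y := by
  rw [cantorDiffScheme_cons] at hy
  linarith [hy.1, pow_pos (by norm_num : (0 : ℝ) < 3⁻¹) (cantorDepth l + a + 1)]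

theorem mem_cantorSet_diff_of_forall_mem_cantorDiffScheme {x : ℕ → ℕ} {y : ℝ}
    (hy : ∀ n, y ∈ cantorDiffScheme (PiNat.res x n)) : y ∈ cantorSet \ B1 := by
  refine ⟨mem_iInter.2 fun n => cantorDiffScheme_subset_preCantorSet _ n
    (PiNat.res_length x n).ge (hy n), fun hyB => ?_⟩
  rw [B1_eq_iUnion_cantorLeftEndpoints, mem_iUnion] at hyB
  obtain ⟨n, hn⟩ := hyB
  set l := PiNat.res x n
  have hDn : n ≤ cantorDepth l := (PiNat.res_length x n).ge.trans (length_le_cantorDepth l)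
  have hchild : y ∈ cantorDiffScheme (x n :: l) := PiNat.res_succ x n ▸ hy (n + 1)
  have hlt := cantorCorner_lt_of_mem_cantorDiffScheme_cons hchild
  have hle := (cantorDiffScheme_antitone l (x n) hchild).2
  have hsep := two_mul_le_abs_sub_of_mem_cantorLeftEndpoints
    (cantorLeftEndpoints_mono hDn hn) (cantorCorner_mem l) hlt.ne'
  rw [abs_of_pos (sub_pos.2 hlt)] at hsep
  linarith [pow_pos (by norm_num : (0 : ℝ) < 3⁻¹) (cantorDepth l)]

theorem isOpen_preimage_cantorDiffScheme (l : List ℕ) :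
    IsOpen (((↑) : (cantorSet \ B1 : Set ℝ) → ℝ) ⁻¹' cantorDiffScheme l) := by
  have ht : (0 : ℝ) < 3⁻¹ ^ cantorDepth l := by positivity
  have : ((↑) : (cantorSet \ B1 : Set ℝ) → ℝ) ⁻¹' cantorDiffScheme l = (↑) ⁻¹'
      Ioo (cantorCorner l - 3⁻¹ ^ cantorDepth l) (cantorCorner l + 2 * 3⁻¹ ^ cantorDepth l) := by
    ext z
    refine ⟨fun ⟨h₁, h₂⟩ => ⟨by linarith, by linarith⟩, fun hz => ?_⟩
    exact preCantorSet_inter_Ioo_subset (cantorCorner_mem l) ⟨mem_iInter.1 z.2.1 _, hz⟩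
  rw [this]
  exact isOpen_Ioo.preimage continuous_subtype_val

theorem nonempty_homeomorph_cantorSet_diff_B1 :
    Nonempty ((ℕ → ℕ) ≃ₜ (cantorSet \ B1 : Set ℝ)) :=
  CantorScheme.nonempty_homeomorph_of_cover
    (cantorDiffScheme_antitone.closureAntitone fun _ => isClosed_Icc)
    cantorDiffScheme_disjoint cantorDiffScheme_vanishingDiam cantorDiffScheme_nonempty
    (fun y hy => by simpa [cantorDiffScheme, cantorCorner, cantorDepth] using
      cantorSet_subset_unitInterval hy.1)
    (fun _ _ hyT hy => exists_mem_cantorDiffScheme_cons hy hyT)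
    (fun _ _ => mem_cantorSet_diff_of_forall_mem_cantorDiffScheme)
    isOpen_preimage_cantorDiffScheme

/-- The closure of B₁ in H(A₁) is the Cantor set; it is homeomorphic (in the subspace
topology from H(A₁)) to the Cantor set with the Euclidean topology, and the closure
minus B₁ is homeomorphic to the irrationals. -/
theorem closure_B1_eq_cantorSet_and_homeomorphisms :
    closure[hattori A1] B1 = cantorSet ∧
    Nonempty (@Homeomorph ↥(closure[hattori A1] B1) ↥cantorSet
      (TopologicalSpace.induced ((↑) : (closure[hattori A1] B1) → ℝ) (hattori A1))
      inferInstance) ∧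
    Nonempty (@Homeomorph ↥((closure[hattori A1] B1) \ B1) ↥{x : ℝ | Irrational x}
      (TopologicalSpace.induced ((↑) : ↥((closure[hattori A1] B1) \ B1) → ℝ) (hattori A1))
      inferInstance) := by
  refine ⟨closure_hattori_A1_B1, ?_, ?_⟩
  · rw [closure_hattori_A1_B1, induced_hattori_A1_eq subset_rfl]
    exact ⟨Homeomorph.refl _⟩
  · rw [closure_hattori_A1_B1, induced_hattori_A1_eq sdiff_subset]
    obtain ⟨e₁⟩ := nonempty_homeomorph_cantorSet_diff_B1
    obtain ⟨e₂⟩ := nonempty_homeomorph_irrational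
    let e₀ : (ℕ → ℕ) ≃ₜ (ℕ → ℤ) :=
      .piCongrRight fun _ => Equiv.intEquivNat.symm.toHomeomorphOfDiscrete
    exact ⟨e₁.symm.trans (e₀.trans e₂)⟩
end

section
/- The space H(A₁) is σ-compact, yet the set B₁ = ℝ \ A₁ is not a G_δ-subset of ℝ with the Euclidean topology. (Hence the implication 'ℝ \ A countable and G_δ in the real line implies H(A) σ-compact' is not invertible.) -/
open Set TopologicalSpace Topology

/-!
A left end `x` of a stage-`n` interval of the Cantor construction has no point of
`C = closure B₁` in `(x - 3⁻ⁿ, x)`. Hence the inclusion of `C` into `H(A₁)` is continuous and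
`C` is `H(A₁)`-compact, while `ℝ \ C` is Euclidean σ-compact and lies in `A₁`, where Euclidean
compact sets stay compact in `H(A₁)`. On the other hand `B₁` is countable and has no isolated
points, so by Baire's theorem, which applies to Gδ subsets of `ℝ`, it is not a Gδ set.
-/

theorem IsCompact.isCompact_hattori {A K : Set ℝ} (hK : IsCompact K)
    (hleft : ∀ b ∈ K \ A, ∃ δ > 0, Disjoint (Ioo (b - δ) b) K) :
    @IsCompact ℝ (hattori A) K := by
  have : CompactSpace K := isCompact_iff_compactSpace.mp hK
  have hcont : Continuous[_, hattori A] (Subtype.val : K → ℝ) := by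
    refine continuous_generateFrom_iff.mpr ?_
    rintro s (hs | ⟨b, hbA, ε, -, rfl⟩)
    · exact hs.out.preimage continuous_subtype_val
    by_cases hbK : b ∈ K
    · obtain ⟨δ, hδ, hdisj⟩ := hleft b ⟨hbK, hbA⟩
      convert (isOpen_Ioo (a := b - δ) (b := b + ε)).preimage continuous_subtype_val using 1
      ext ⟨x, hx⟩
      simp only [mem_preimage, mem_Ico, mem_Ioo]
      refine ⟨fun h => ⟨by linarith [h.1], h.2⟩, fun h => ⟨?_, h.2⟩⟩
      exact not_lt.mp fun hxb => disjoint_left.mp hdisj ⟨h.1, hxb⟩ hx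
    · convert (isOpen_Ioo (a := b) (b := b + ε)).preimage continuous_subtype_val using 1
      ext ⟨x, hx⟩
      simp only [mem_preimage, mem_Ico, mem_Ioo]
      exact and_congr_left' ⟨fun h => h.lt_of_ne (by rintro rfl; exact hbK hx), le_of_lt⟩
  simpa using @isCompact_range K ℝ _ (hattori A) _ _ hcont

theorem IsSigmaCompact.isSigmaCompact_hattori {A s : Set ℝ} (hs : IsSigmaCompact s)
    (hsA : s ⊆ A) : @IsSigmaCompact ℝ (hattori A) s := by
  obtain ⟨K, hK, rfl⟩ := hs
  exact ⟨K, fun n => (hK n).isCompact_hattori fun b hb =>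
    absurd (hsA (mem_iUnion_of_mem n hb.1)) hb.2, rfl⟩

theorem IsOpen.isSigmaCompact {X : Type*} [TopologicalSpace X] [LocallyCompactSpace X]
    [SecondCountableTopology X] {U : Set X} (hU : IsOpen U) : IsSigmaCompact U :=
  have := hU.locallyCompactSpace
  isSigmaCompact_iff_sigmaCompactSpace.mpr inferInstance

theorem Preperfect.not_isGδ_of_countable {X : Type*} [TopologicalSpace X] [T2Space X]
    [LocallyCompactSpace X] {s : Set X} (hp : Preperfect s) (hc : s.Countable)
    (hne : s.Nonempty) : ¬ IsGδ s := by
  intro hG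
  -- By Baire's theorem one of the countably many singletons is open in `s`.
  have := hG.baireSpace_of_t2Space_locallyCompactSpace
  have := hc.to_subtype
  have := hne.to_subtype
  obtain ⟨x, hx⟩ := nonempty_interior_of_iUnion_of_closed (f := fun x : s => ({x} : Set s))
    (fun _ => isClosed_singleton) (iUnion_of_singleton _)
  have hopen : IsOpen ({x} : Set s) := hx.subset_singleton_iff.mp interior_subset ▸ isOpen_interior
  obtain ⟨U, hU, hUx⟩ := isOpen_induced_iff.mp hopen
  obtain ⟨y, ⟨hyU, hys⟩, hyx⟩ :=
    preperfect_iff_nhds.mp hp x x.2 U (hU.mem_nhds (by simpa using hUx.ge rfl))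
  exact hyx (congrArg Subtype.val (hUx.le (show (⟨y, hys⟩ : s) ∈ Subtype.val ⁻¹' U from hyU)))

def cantorLeftEnds (n : ℕ) : Set ℝ :=
  {x | ∃ c : ℕ → ℝ, (∀ i, c i = 0 ∨ c i = 2) ∧ x = ∑ i ∈ Finset.range n, c i / 3 ^ (i + 1)}

theorem B1_eq_iUnion_cantorLeftEnds : B1 = ⋃ n, cantorLeftEnds n := by
  ext x
  simp only [B1, cantorLeftEnds, mem_iUnion]
  rfl

theorem eq_zero_of_mem_cantorLeftEnds_zero {x : ℝ} (hx : x ∈ cantorLeftEnds 0) : x = 0 := by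
  obtain ⟨c, -, rfl⟩ := hx
  simp

theorem exists_eq_div_three_of_mem_cantorLeftEnds_succ {n : ℕ} {x : ℝ}
    (hx : x ∈ cantorLeftEnds (n + 1)) :
    ∃ c ∈ ({0, 2} : Set ℝ), ∃ y ∈ cantorLeftEnds n, x = (c + y) / 3 := by
  obtain ⟨c, hc, rfl⟩ := hx
  refine ⟨c 0, hc 0, _, ⟨fun i => c (i + 1), fun i => hc (i + 1), rfl⟩, ?_⟩
  rw [Finset.sum_range_succ', add_comm, add_div, Finset.sum_div]
  congr 1
  · norm_num
  · refine Finset.sum_congr rfl fun i _ => ?_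
    rw [pow_succ _ (i + 1)]
    ring

theorem add_mem_cantorLeftEnds_succ {n : ℕ} {x c : ℝ} (hx : x ∈ cantorLeftEnds n)
    (hc : c = 0 ∨ c = 2) : x + c / 3 ^ (n + 1) ∈ cantorLeftEnds (n + 1) := by
  obtain ⟨d, hd, rfl⟩ := hx
  refine ⟨Function.update d n c, fun i => ?_, ?_⟩
  · rcases eq_or_ne i n with rfl | hi
    · simpa using hc
    · simpa [hi] using hd i
  · rw [Finset.sum_range_succ, Function.update_self]
    congr 1
    refine Finset.sum_congr rfl fun i hi => ?_
    rw [Function.update_of_ne (Finset.mem_range.mp hi).ne]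

theorem monotone_cantorLeftEnds : Monotone cantorLeftEnds :=
  monotone_nat_of_le_succ fun n x hx => by
    simpa using add_mem_cantorLeftEnds_succ hx (Or.inl rfl)

theorem finite_cantorLeftEnds (n : ℕ) : (cantorLeftEnds n).Finite := by
  induction n with
  | zero => exact (finite_singleton 0).subset fun x hx => eq_zero_of_mem_cantorLeftEnds_zero hx
  | succ n ih =>
    refine ((toFinite {0, 2}).image2 (fun c y => (c + y) / 3) ih).subset fun x hx => ?_
    obtain ⟨c, hc, y, hy, rfl⟩ := exists_eq_div_three_of_mem_cantorLeftEnds_succ hx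
    exact mem_image2_of_mem hc hy

theorem countable_B1 : B1.Countable := by
  rw [B1_eq_iUnion_cantorLeftEnds]
  exact countable_iUnion fun n => (finite_cantorLeftEnds n).countable

theorem mem_Icc_of_mem_cantorLeftEnds {n : ℕ} {x : ℝ} (hx : x ∈ cantorLeftEnds n) :
    x ∈ Icc 0 1 := by
  induction n generalizing x with
  | zero => simp [eq_zero_of_mem_cantorLeftEnds_zero hx]
  | succ n ih =>
    obtain ⟨c, hc, y, hy, rfl⟩ := exists_eq_div_three_of_mem_cantorLeftEnds_succ hx
    obtain ⟨hy0, hy1⟩ := ih hy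
    rcases hc with rfl | rfl <;> constructor <;> linarith

theorem B1_subset_Icc : B1 ⊆ Icc 0 1 := by
  rw [B1_eq_iUnion_cantorLeftEnds]
  exact iUnion_subset fun n _ => mem_Icc_of_mem_cantorLeftEnds

theorem exists_eq_div_three_of_mem_B1 {y : ℝ} (hy : y ∈ B1) :
    ∃ c ∈ ({0, 2} : Set ℝ), ∃ z ∈ B1, y = (c + z) / 3 := by
  simp only [B1_eq_iUnion_cantorLeftEnds, mem_iUnion] at hy ⊢
  obtain ⟨m, hm⟩ := hy
  obtain ⟨c, hc, z, hz, rfl⟩ :=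
    exists_eq_div_three_of_mem_cantorLeftEnds_succ (monotone_cantorLeftEnds m.le_succ hm)
  exact ⟨c, hc, z, ⟨m, hz⟩, rfl⟩

-- Induction on `n`, comparing the leading ternary digits of `x` and `y`.
theorem add_one_div_three_pow_le_of_lt {n : ℕ} {x y : ℝ} (hx : x ∈ cantorLeftEnds n)
    (hy : y ∈ B1) (hyx : y < x) : y + 1 / 3 ^ n ≤ x := by
  induction n generalizing x y with
  | zero => linarith [eq_zero_of_mem_cantorLeftEnds_zero hx, (B1_subset_Icc hy).1]
  | succ n ih =>
    obtain ⟨c, hc, x', hx', rfl⟩ := exists_eq_div_three_of_mem_cantorLeftEnds_succ hx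
    obtain ⟨d, hd, y', hy', rfl⟩ := exists_eq_div_three_of_mem_B1 hy
    obtain ⟨hx'0, hx'1⟩ := mem_Icc_of_mem_cantorLeftEnds hx'
    obtain ⟨hy'0, hy'1⟩ := B1_subset_Icc hy'
    have hpow : 1 / (3 : ℝ) ^ (n + 1) = 1 / 3 ^ n / 3 := by rw [pow_succ]; ring
    have hpow_le : 1 / (3 : ℝ) ^ n ≤ 1 :=
      div_le_one_of_le₀ (one_le_pow₀ (by norm_num)) (by positivity)
    rw [hpow]
    rcases lt_or_ge y' x' with hlt | hge
    · have := ih hx' hy' hlt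
      rcases hc with rfl | rfl <;> rcases hd with rfl | rfl <;> linarith
    · rcases hc with rfl | rfl <;> rcases hd with rfl | rfl <;> linarith

open Filter in
theorem preperfect_B1 : Preperfect B1 := by
  intro x hx
  obtain ⟨n, hxn⟩ := mem_iUnion.mp (B1_eq_iUnion_cantorLeftEnds ▸ hx)
  have hmem (k : ℕ) : x + 2 / 3 ^ (k + (n + 1)) ∈ B1 := by
    rw [B1_eq_iUnion_cantorLeftEnds]
    exact mem_iUnion_of_mem _ (add_mem_cantorLeftEnds_succ
      (monotone_cantorLeftEnds (Nat.le_add_left n k) hxn) (Or.inr rfl))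
  have hlim : Tendsto (fun k : ℕ => x + 2 / 3 ^ (k + (n + 1))) atTop (𝓝 x) := by
    simpa using tendsto_const_nhds.add <| tendsto_const_nhds.div_atTop <|
      (tendsto_pow_atTop_atTop_of_one_lt (by norm_num : (1 : ℝ) < 3)).comp
        (tendsto_add_atTop_nat (n + 1))
  refine accPt_iff_frequently.mpr (hlim.frequently (Frequently.of_forall fun k => ⟨?_, hmem k⟩))
  exact (lt_add_of_pos_right x (by positivity)).ne'

theorem not_isGδ_B1 : ¬ IsGδ B1 :=
  preperfect_B1.not_isGδ_of_countable countable_B1 ⟨0, 0, fun _ => 0, by simp⟩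

theorem isCompact_closure_B1 : IsCompact (closure B1) :=
  isCompact_Icc.of_isClosed_subset isClosed_closure (closure_minimal B1_subset_Icc isClosed_Icc)

theorem disjoint_Ioo_closure_B1 {n : ℕ} {x : ℝ} (hx : x ∈ cantorLeftEnds n) :
    Disjoint (Ioo (x - 1 / 3 ^ n) x) (closure B1) := by
  refine Disjoint.closure_right (disjoint_left.mpr fun y hy hyB => ?_) isOpen_Ioo
  linarith [hy.1, add_one_div_three_pow_le_of_lt hx hyB hy.2]

theorem sigmaCompactSpace_hattori_A1 : @SigmaCompactSpace ℝ (hattori A1) := by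
  have hC : @IsCompact ℝ (hattori A1) (closure B1) := by
    refine isCompact_closure_B1.isCompact_hattori fun b ⟨_, hb⟩ => ?_
    obtain ⟨n, hbn⟩ := mem_iUnion.mp (B1_eq_iUnion_cantorLeftEnds ▸ not_not.mp hb)
    exact ⟨1 / 3 ^ n, by positivity, disjoint_Ioo_closure_B1 hbn⟩
  obtain ⟨L, hL, hLU⟩ := isClosed_closure.isOpen_compl.isSigmaCompact.isSigmaCompact_hattori
    (compl_subset_compl.mpr (subset_closure : B1 ⊆ closure B1))
  refine (@isSigmaCompact_univ_iff ℝ (hattori A1)).mp ⟨fun n => closure B1 ∪ L n,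
    fun n => @IsCompact.union ℝ (hattori A1) _ _ hC (hL n), ?_⟩
  rw [← union_iUnion, hLU, union_compl_self]

/-- H(A₁) is σ-compact but B₁ = ℝ \ A₁ is not a G_δ-subset of the Euclidean real line. -/
theorem sigmaCompact_A1_and_B1_not_Gdelta :
    @SigmaCompactSpace ℝ (hattori A1) ∧ ¬ IsGδ B1 :=
  ⟨sigmaCompactSpace_hattori_A1, not_isGδ_B1⟩
end
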